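/- arXiv:1605.00840 — 2 statements merged into one kernel-verified Lean document; each statement's English description precedes it below -/
import Mathlib

section
/- For every s ≥ 1, there exists a strictly increasing chain ∅ = α_0 < α_1 < ⋯ < α_D = β(s) in the poset 𝒜(s) with D = s·2^{s−1}, and every strictly increasing chain in 𝒜(s) from ∅ to β(s) has length at most s·2^{s−1}; that is, the maximal length of a chain from ∅ to β(s) in 𝒜(s) equals s·2^{s−1}. -/
/-!
The weight `∑ Ω ∈ α, #Ω` is strictly monotone on `𝒜(s)`: an injection `f` with `Ω ⊆ f Ω` can
only preserve the weight if it is the inclusion of `α'` onto all of `α`. Since `β(s)` is the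
largest element and has weight `∑ Ω ⊆ [s], #Ω = s·2^(s-1)`, no chain from `∅` is longer than that.
Conversely every `α ≠ β(s)` lies below an element of weight one more: take a missing set `Ω` of
minimal size and replace `Ω` minus a point, which is in `α` or empty, by `Ω`. Iterating from `∅`
climbs through every weight up to `β(s)`.
-/

namespace GH

/-- The order relation on finite sets of subsets of `{1,…,s}` (modelled as `Fin s`):
`α' ≤ α` iff there exists an injective map `f : α' → α` with `Ω ⊆ f Ω` for every `Ω ∈ α'`. -/
def Ale {s : ℕ} (α' α : Finset (Finset (Fin s))) : Prop :=
  ∃ f : {Ω : Finset (Fin s) // Ω ∈ α'} → {Ω : Finset (Fin s) // Ω ∈ α},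
    Function.Injective f ∧ ∀ Ω, Ω.1 ⊆ (f Ω).1

/-- The poset `𝒜(s)`: finite sets whose elements are nonempty subsets of `{1,…,s}`. -/
def A (s : ℕ) : Type := {α : Finset (Finset (Fin s)) // ∀ Ω ∈ α, Ω.Nonempty}

/-- The order relation of `𝒜(s)`. -/
def Ale' {s : ℕ} (α' α : A s) : Prop := Ale α'.1 α.1

/-- The strict order of `𝒜(s)`. -/
def Alt' {s : ℕ} (α' α : A s) : Prop := Ale' α' α ∧ α' ≠ α

/-- The bottom element `∅ ∈ 𝒜(s)`. -/
def botA (s : ℕ) : A s := ⟨∅, fun _ h => absurd h (Finset.notMem_empty _)⟩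

/-- The top element `β(s) ∈ 𝒜(s)`: the set of all nonempty subsets of `{1,…,s}`. -/
def topA (s : ℕ) : A s :=
  ⟨Finset.univ.filter (fun Ω : Finset (Fin s) => Ω.Nonempty),
    fun _ h => (Finset.mem_filter.mp h).2⟩

open Finset

variable {ι : Type*}

def weight (α : Finset (Finset ι)) : ℕ := ∑ Ω ∈ α, #Ω

lemma eq_of_subset_of_weight_le {α' α : Finset (Finset ι)} (h : α' ⊆ α)
    (hα : ∀ Ω ∈ α, Ω.Nonempty) (hw : weight α ≤ weight α') : α' = α := by
  by_contra hne
  obtain ⟨Ω, hΩα, hΩα'⟩ := exists_of_ssubset (h.ssubset_of_ne hne)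
  exact hw.not_gt (sum_lt_sum_of_subset h hΩα hΩα' (hα Ω hΩα).card_pos fun _ _ _ => Nat.zero_le _)

lemma weight_eq_sum_coe (α : Finset (Finset ι)) : weight α = ∑ Ω : α, #Ω.1 :=
  (sum_coe_sort α card).symm

lemma sum_card_le_weight_of_injective {α' α : Finset (Finset ι)}
    {f : {Ω // Ω ∈ α'} → {Ω // Ω ∈ α}} (hf : Function.Injective f) :
    ∑ Ω, #(f Ω).1 ≤ weight α := by
  calc ∑ Ω, #(f Ω).1 = ∑ Ω ∈ univ.map ⟨f, hf⟩, #Ω.1 := (sum_map univ ⟨f, hf⟩ (fun Ω => #Ω.1)).symm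
    _ ≤ ∑ Ω : α, #Ω.1 := sum_le_sum_of_subset (subset_univ _)
    _ = weight α := (weight_eq_sum_coe α).symm

variable {s : ℕ}

lemma Ale.refl (α : Finset (Finset (Fin s))) : Ale α α :=
  ⟨id, Function.injective_id, fun _ => subset_rfl⟩

lemma Ale.trans {α β γ : Finset (Finset (Fin s))} (hαβ : Ale α β) (hβγ : Ale β γ) : Ale α γ := by
  obtain ⟨f, hf, hfΩ⟩ := hαβ
  obtain ⟨g, hg, hgΩ⟩ := hβγ
  exact ⟨g ∘ f, hg.comp hf, fun Ω => (hfΩ Ω).trans (hgΩ (f Ω))⟩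

lemma Ale.of_subset {α' α : Finset (Finset (Fin s))} (h : α' ⊆ α) : Ale α' α :=
  ⟨Set.inclusion h, Set.inclusion_injective h, fun _ => subset_rfl⟩

lemma Ale.weight_le {α' α : Finset (Finset (Fin s))} (h : Ale α' α) : weight α' ≤ weight α := by
  obtain ⟨f, hf, hfΩ⟩ := h
  calc weight α' = ∑ Ω : α', #Ω.1 := weight_eq_sum_coe α'
    _ ≤ ∑ Ω, #(f Ω).1 := sum_le_sum fun Ω _ => card_le_card (hfΩ Ω)
    _ ≤ weight α := sum_card_le_weight_of_injective hf

lemma Ale.subset_of_weight_le {α' α : Finset (Finset (Fin s))} (h : Ale α' α)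
    (hw : weight α ≤ weight α') : α' ⊆ α := by
  obtain ⟨f, hf, hfΩ⟩ := h
  have hsum : ∑ Ω : α', #Ω.1 = ∑ Ω, #(f Ω).1 := by
    refine le_antisymm (sum_le_sum fun Ω _ => card_le_card (hfΩ Ω)) ?_
    calc ∑ Ω, #(f Ω).1 ≤ weight α := sum_card_le_weight_of_injective hf
      _ ≤ weight α' := hw
      _ = ∑ Ω : α', #Ω.1 := weight_eq_sum_coe α'
  intro Ω hΩ
  have hcard := (sum_eq_sum_iff_of_le fun Ω _ => card_le_card (hfΩ Ω)).1 hsum ⟨Ω, hΩ⟩ (mem_univ _)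
  have hfix : Ω = (f ⟨Ω, hΩ⟩).1 := eq_of_subset_of_card_le (hfΩ ⟨Ω, hΩ⟩) hcard.ge
  exact hfix ▸ (f ⟨Ω, hΩ⟩).2

lemma Ale.eq_of_weight_le {α' α : Finset (Finset (Fin s))} (h : Ale α' α)
    (hα : ∀ Ω ∈ α, Ω.Nonempty) (hw : weight α ≤ weight α') : α' = α :=
  eq_of_subset_of_weight_le (h.subset_of_weight_le hw) hα hw

lemma ale_insert_erase {α : Finset (Finset (Fin s))} {Ω' Ω : Finset (Fin s)} (hΩ' : Ω' ⊆ Ω)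
    (hΩ : Ω ∉ α) : Ale α (insert Ω (α.erase Ω')) := by
  refine ⟨fun T => if hT : T.1 = Ω' then ⟨Ω, mem_insert_self _ _⟩
    else ⟨T.1, mem_insert_of_mem (mem_erase.2 ⟨hT, T.2⟩)⟩, ?_, ?_⟩
  · intro T₁ T₂ h
    dsimp only at h
    split_ifs at h with h₁ h₂ h₂ <;> simp only [Subtype.ext_iff] at h
    · exact Subtype.ext (h₁.trans h₂.symm)
    · exact absurd (h ▸ T₂.2) hΩ
    · exact absurd (h ▸ T₁.2) hΩ
    · exact Subtype.ext h
  · intro T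
    dsimp only
    split_ifs with hT
    · exact hT ▸ hΩ'
    · exact subset_rfl

instance : PartialOrder (A s) where
  le := Ale'
  le_refl α := Ale.refl α.1
  le_trans _ _ _ := Ale.trans
  le_antisymm α β hαβ hβα := Subtype.ext (Ale.eq_of_weight_le hαβ β.2 (Ale.weight_le hβα))

lemma alt'_iff_lt {α β : A s} : Alt' α β ↔ α < β := by
  rw [lt_iff_le_and_ne]
  rfl

lemma weight_strictMono : StrictMono fun α : A s => weight α.1 := fun _ β h =>
  (Ale.weight_le h.le).lt_of_ne fun hw => h.ne (Subtype.ext (Ale.eq_of_weight_le h.le β.2 hw.ge))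

lemma le_topA (α : A s) : α ≤ topA s :=
  Ale.of_subset fun Ω hΩ => mem_filter.2 ⟨mem_univ _, α.2 Ω hΩ⟩

lemma weight_topA (s : ℕ) : weight (topA s).1 = s * 2 ^ (s - 1) := by
  calc weight (topA s).1 = ∑ Ω ∈ (univ : Finset (Fin s)).powerset, #Ω := by
        rw [weight, topA, powerset_univ, sum_filter_of_ne fun Ω _ h => card_ne_zero.1 h]
    _ = ∑ m ∈ range (s + 1), m * s.choose m := by
        rw [sum_powerset_apply_card fun m => m]
        simp [mul_comm]
    _ = s * 2 ^ (s - 1) := Nat.sum_range_mul_choose s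

lemma exists_le_weight_eq_succ {α : A s} (hα : α ≠ topA s) :
    ∃ β : A s, α ≤ β ∧ weight β.1 = weight α.1 + 1 := by
  have hmissing : ((topA s).1 \ α.1).Nonempty :=
    sdiff_nonempty.2 fun h => hα (le_antisymm (le_topA α) (Ale.of_subset h))
  obtain ⟨Ω, hΩ, hmin⟩ := exists_min_image _ card hmissing
  obtain ⟨hΩtop, hΩα⟩ := mem_sdiff.1 hΩ
  obtain ⟨x, hx⟩ := (mem_filter.1 hΩtop).2
  have hΩ' : Ω.erase x ∈ α.1 ∨ Ω.erase x = ∅ := by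
    by_contra! h
    have := hmin _ (mem_sdiff.2 ⟨mem_filter.2 ⟨mem_univ _, h.2⟩, h.1⟩)
    have := card_erase_lt_of_mem hx
    omega
  have herase : weight (α.1.erase (Ω.erase x)) + #(Ω.erase x) = weight α.1 := by
    rcases hΩ' with h | h
    · exact sum_erase_add _ _ h
    · rw [h, card_empty, add_zero]
      exact sum_erase _ card_empty
  refine ⟨⟨insert Ω (α.1.erase (Ω.erase x)), ?_⟩, ale_insert_erase (erase_subset x Ω) hΩα, ?_⟩
  · simp only [mem_insert, forall_eq_or_imp]
    exact ⟨⟨x, hx⟩, fun T hT => α.2 T (mem_of_mem_erase hT)⟩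
  · calc weight (insert Ω (α.1.erase (Ω.erase x))) = #Ω + weight (α.1.erase (Ω.erase x)) :=
          sum_insert fun h => hΩα (mem_of_mem_erase h)
      _ = weight α.1 + 1 := by rw [← card_erase_add_one hx, ← herase]; ring

lemma exists_strictMono_chain (s : ℕ) : ∃ c : Fin (s * 2 ^ (s - 1) + 1) → A s,
    StrictMono c ∧ c 0 = botA s ∧ c (Fin.last _) = topA s := by
  set N := s * 2 ^ (s - 1)
  have hstep (α : A s) : ∃ β, α ≤ β ∧ weight β.1 = min (weight α.1 + 1) N := by
    by_cases hα : α = topA s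
    · exact ⟨α, le_rfl, by rw [hα, weight_topA]; omega⟩
    · obtain ⟨β, hαβ, hβ⟩ := exists_le_weight_eq_succ hα
      have : weight α.1 < weight (topA s).1 := weight_strictMono ((le_topA α).lt_of_ne hα)
      rw [weight_topA] at this
      exact ⟨β, hαβ, by omega⟩
  choose next hle hweight using hstep
  have hmono : Monotone fun k => next^[k] (botA s) :=
    monotone_nat_of_le_succ fun k => by rw [Function.iterate_succ_apply']; exact hle _
  have hw (k : ℕ) : weight (next^[k] (botA s)).1 = min k N := by
    induction k with
    | zero => rfl
    | succ k ih => rw [Function.iterate_succ_apply', hweight, ih]; omega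
  refine ⟨fun i => next^[i] (botA s), Monotone.strictMono_of_injective (fun i j hij => hmono hij)
    fun i j h => Fin.ext ?_, rfl,
    Subtype.ext (Ale.eq_of_weight_le (le_topA _) (topA s).2 ?_)⟩
  · have := congrArg (fun α : A s => weight α.1) h
    simp only [hw] at this
    omega
  · simp [hw, weight_topA, N]

lemma chain_length_le {D : ℕ} {c : Fin (D + 1) → A s} (hc : StrictMono c) :
    D ≤ s * 2 ^ (s - 1) := by
  have hbound (i : Fin (D + 1)) : weight (c i).1 < s * 2 ^ (s - 1) + 1 :=
    Nat.lt_succ_of_le (weight_topA s ▸ weight_strictMono.monotone (le_topA (c i)))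
  simpa using Fintype.card_le_of_injective (fun i => (⟨_, hbound i⟩ : Fin (s * 2 ^ (s - 1) + 1)))
    fun i j h => (weight_strictMono.comp hc).injective (Fin.val_eq_of_eq h)

theorem maximal_chain_length_general (s : ℕ) :
    (∃ c : Fin (s * 2 ^ (s - 1) + 1) → A s,
      (∀ i j, i < j → Alt' (c i) (c j)) ∧
      c 0 = botA s ∧ c (Fin.last _) = topA s) ∧
    (∀ (D : ℕ) (c : Fin (D + 1) → A s),
      (∀ i j, i < j → Alt' (c i) (c j)) →
      c 0 = botA s → c (Fin.last D) = topA s → D ≤ s * 2 ^ (s - 1)) := by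
  obtain ⟨c, hc, hbot, htop⟩ := exists_strictMono_chain s
  exact ⟨⟨c, fun i j hij => alt'_iff_lt.2 (hc hij), hbot, htop⟩,
    fun D c hc _ _ => chain_length_le fun i j hij => alt'_iff_lt.1 (hc i j hij)⟩

/-- **Theorem (maximal chains in `𝒜(s)`).**
For every `s ≥ 1` there is a strictly increasing chain `∅ = α_0 < α_1 < ⋯ < α_D = β(s)` in the
poset `𝒜(s)` with `D = s·2^(s-1)`, and every strictly increasing chain in `𝒜(s)` from `∅` to
`β(s)` has length at most `s·2^(s-1)`; that is, the maximal length of a chain from `∅` to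
`β(s)` in `𝒜(s)` equals `s·2^(s-1)`. -/
theorem maximal_chain_length (s : ℕ) (hs : 1 ≤ s) :
    (∃ c : Fin (s * 2 ^ (s - 1) + 1) → A s,
      (∀ i j, i < j → Alt' (c i) (c j)) ∧
      c 0 = botA s ∧ c (Fin.last _) = topA s) ∧
    (∀ (D : ℕ) (c : Fin (D + 1) → A s),
      (∀ i j, i < j → Alt' (c i) (c j)) →
      c 0 = botA s → c (Fin.last D) = topA s → D ≤ s * 2 ^ (s - 1)) :=
  maximal_chain_length_general s

end GH
end

section
/- Let s ≥ 1, let n_1,…,n_s be integers with n_i ≥ 2 for all i, and let p, q be integers with p ≥ 2^s and q − p ≥ (n_1+1)(n_2+1)⋯(n_s+1) − 2^s. Consider the subposet P of 𝒜(s) consisting of those α with |α| ≤ p and Σ_{Ω ∈ α} (Π_{i ∈ Ω} n_i − 1) ≤ q − p. Then β(s) belongs to P and is the greatest element of P, i.e., α ≤ β(s) for every α ∈ P. -/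
namespace GH

/-- The set `β(s)` of all nonempty subsets of `{1,…,s}`. -/
def betaA (s : ℕ) : Finset (Finset (Fin s)) :=
  Finset.univ.filter (fun Ω : Finset (Fin s) => Ω.Nonempty)

theorem mem_betaA {s : ℕ} {Ω : Finset (Fin s)} : Ω ∈ betaA s ↔ Ω.Nonempty := by
  simp [betaA]

theorem betaA_eq_erase_empty (s : ℕ) : betaA s = Finset.univ.erase ∅ := by
  ext Ω
  simp [mem_betaA, Finset.nonempty_iff_ne_empty]

theorem card_betaA (s : ℕ) : (betaA s).card = 2 ^ s - 1 := by
  simp [betaA_eq_erase_empty, Finset.card_erase_of_mem]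

theorem sum_prod_betaA {R : Type*} [CommRing R] {s : ℕ} (f : Fin s → R) :
    ∑ Ω ∈ betaA s, ∏ i ∈ Ω, f i = ∏ i, (f i + 1) - 1 := by
  have hexpand : ∑ Ω : Finset (Fin s), ∏ i ∈ Ω, f i = ∏ i, (f i + 1) := by
    simp [Finset.prod_add, Finset.powerset_univ]
  rw [← hexpand, ← Finset.add_sum_erase _ _ (Finset.mem_univ ∅), betaA_eq_erase_empty]
  simp

theorem sum_prod_sub_one_betaA {R : Type*} [CommRing R] {s : ℕ} (f : Fin s → R) :
    ∑ Ω ∈ betaA s, (∏ i ∈ Ω, f i - 1) = ∏ i, (f i + 1) - 2 ^ s := by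
  rw [Finset.sum_sub_distrib, sum_prod_betaA, Finset.sum_const, card_betaA, nsmul_one,
    Nat.cast_sub Nat.one_le_two_pow]
  push_cast
  ring

theorem ale_betaA {s : ℕ} {α : Finset (Finset (Fin s))} (hα : ∀ Ω ∈ α, Ω.Nonempty) :
    Ale α (betaA s) :=
  ⟨fun Ω => ⟨Ω.1, mem_betaA.2 (hα Ω.1 Ω.2)⟩,
    fun _ _ h => Subtype.ext (Subtype.mk.inj h), fun _ => subset_rfl⟩

theorem betaA_greatest_general (s : ℕ) (n : Fin s → ℤ)
    (p q : ℤ) (hp : 2 ^ s ≤ p)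
    (hq : (∏ i, (n i + 1)) - 2 ^ s ≤ q - p) :
    (((betaA s).card : ℤ) ≤ p ∧
      (∑ Ω ∈ betaA s, ((∏ i ∈ Ω, n i) - 1)) ≤ q - p) ∧
    (∀ α : Finset (Finset (Fin s)), (∀ Ω ∈ α, Ω.Nonempty) →
      ((α.card : ℤ) ≤ p) → ((∑ Ω ∈ α, ((∏ i ∈ Ω, n i) - 1)) ≤ q - p) →
      Ale α (betaA s)) := by
  refine ⟨⟨?_, ?_⟩, fun α hα _ _ => ale_betaA hα⟩
  · rw [card_betaA, Nat.cast_sub Nat.one_le_two_pow]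
    push_cast
    linarith
  · rwa [sum_prod_sub_one_betaA]

/-- **Theorem (`β(s)` is the greatest element of the truncated poset).**
Let `s ≥ 1`, let `n_1,…,n_s` be integers with `n_i ≥ 2` for all `i`, and let `p`, `q` be
integers with `p ≥ 2^s` and `q - p ≥ (n_1+1)⋯(n_s+1) - 2^s`.  Consider the subposet `P` of
`𝒜(s)` consisting of those `α` with `|α| ≤ p` and `∑_{Ω ∈ α} (∏_{i ∈ Ω} n_i - 1) ≤ q - p`.
Then `β(s)` belongs to `P` and is the greatest element of `P`. -/
theorem betaA_greatest (s : ℕ) (hs : 1 ≤ s) (n : Fin s → ℤ) (hn : ∀ i, 2 ≤ n i)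
    (p q : ℤ) (hp : 2 ^ s ≤ p)
    (hq : (∏ i, (n i + 1)) - 2 ^ s ≤ q - p) :
    (((betaA s).card : ℤ) ≤ p ∧
      (∑ Ω ∈ betaA s, ((∏ i ∈ Ω, n i) - 1)) ≤ q - p) ∧
    (∀ α : Finset (Finset (Fin s)), (∀ Ω ∈ α, Ω.Nonempty) →
      ((α.card : ℤ) ≤ p) → ((∑ Ω ∈ α, ((∏ i ∈ Ω, n i) - 1)) ≤ q - p) →
      Ale α (betaA s)) :=
  betaA_greatest_general s n p q hp hq

end GH
end
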